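/- Let A be a finite dimensional k-algebra, α : A⊗A → A* a Hochschild 2-cocycle, and c ∈ Z(A). Suppose there exist α' ∈ (A^{⊗3})*, h' ∈ A*, and β ∈ (A^{⊗2})* such that b₃*(α') = 0, α'∘B₁ + h'∘b₁ = 0, and α̃ ∘ i_c = α' + β∘b₂. Then with h := h' + β∘B₀ + α(1⊗1)·c ∈ A*, one has α(a⊗b)(c) − α(b⊗a)(c) + h(ab − ba) = 0 for all a,b ∈ A. -/

import Mathlib

open TensorProduct

namespace HochschildScaffold

variable (k : Type*) [Field k] (A : Type*) [Ring A] [Algebra k A]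

/-- `Tp k A n` is the `n`-fold tensor power `A^{⊗n}` over `k`. -/
abbrev Tp (n : ℕ) : Type _ := ⨂[k] (_ : Fin n), A

/-- `A^{⊗1} ≃ A`. -/
noncomputable def single : Tp k A 1 ≃ₗ[k] A :=
  PiTensorProduct.subsingletonEquiv (0 : Fin 1)

/-- Attach a tensor factor at the front: `A ⊗ A^{⊗n} ≃ A^{⊗(n+1)}`. -/
noncomputable def toFront (n : ℕ) : (A ⊗[k] Tp k A n) ≃ₗ[k] Tp k A (n + 1) :=
  (TensorProduct.congr (single k A).symm (LinearEquiv.refl k (Tp k A n))) ≪≫ₗ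
    (PiTensorProduct.tmulEquiv k A) ≪≫ₗ
      (PiTensorProduct.reindex k (fun _ => A)
        ((finSumFinEquiv : Fin 1 ⊕ Fin n ≃ Fin (1 + n)).trans (finCongr (Nat.add_comm 1 n))))

/-- Attach a tensor factor at the back: `A^{⊗n} ⊗ A ≃ A^{⊗(n+1)}`. -/
noncomputable def toBack (n : ℕ) : (Tp k A n ⊗[k] A) ≃ₗ[k] Tp k A (n + 1) :=
  (TensorProduct.congr (LinearEquiv.refl k (Tp k A n)) (single k A).symm) ≪≫ₗ
    (PiTensorProduct.tmulEquiv k A) ≪≫ₗ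
      (PiTensorProduct.reindex k (fun _ => A) (finSumFinEquiv : Fin n ⊕ Fin 1 ≃ Fin (n + 1)))

/-- Multiply the first two tensor factors: `a₀ ⊗ a₁ ⊗ ⋯ ↦ (a₀a₁) ⊗ ⋯`. -/
noncomputable def mulFront (n : ℕ) : Tp k A (n + 2) →ₗ[k] Tp k A (n + 1) :=
  (toFront k A n).toLinearMap ∘ₗ
    (LinearMap.rTensor (Tp k A n) (LinearMap.mul' k A)) ∘ₗ
      (TensorProduct.assoc k A A (Tp k A n)).symm.toLinearMap ∘ₗ
        (LinearMap.lTensor A (toFront k A n).symm.toLinearMap) ∘ₗ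
          (toFront k A (n + 1)).symm.toLinearMap

/-- Cyclic rotation `(a₀,…,a_{n-1}) ↦ (a_{n-1}, a₀, …, a_{n-2})` on `A^{⊗n}`. -/
noncomputable def rotR (n : ℕ) : Tp k A n ≃ₗ[k] Tp k A n :=
  PiTensorProduct.reindex k (fun _ => A) (finRotate n)

/-- The `j`-th (non-cyclic) face map `A^{⊗(m+1)} → A^{⊗m}`, multiplying the
`j`-th and `(j+1)`-st tensor factors: `a₀⊗⋯⊗aₘ ↦ a₀⊗⋯⊗aⱼaⱼ₊₁⊗⋯⊗aₘ`. -/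
noncomputable def nface : (m : ℕ) → Fin m → (Tp k A (m + 1) →ₗ[k] Tp k A m)
  | m + 1, j =>
      (PiTensorProduct.reindex k (fun _ => A) ((finRotate (m + 1)) ^ (j : ℕ))).toLinearMap ∘ₗ
        (mulFront k A m) ∘ₗ
          (PiTensorProduct.reindex k (fun _ => A) (((finRotate (m + 2)) ^ (j : ℕ))⁻¹)).toLinearMap

/-- The Hochschild boundary `b_{n+1} : A^{⊗(n+2)} → A^{⊗(n+1)}`, i.e.
`b(a₀⊗⋯⊗a_{n+1}) = Σ_{i=0}^{n} (-1)^i a₀⊗⋯⊗aᵢaᵢ₊₁⊗⋯⊗a_{n+1}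
  + (-1)^{n+1} a_{n+1}a₀⊗a₁⊗⋯⊗aₙ`. -/
noncomputable def hb (n : ℕ) : Tp k A (n + 2) →ₗ[k] Tp k A (n + 1) :=
  (∑ i : Fin (n + 1), ((-1 : k) ^ (i : ℕ)) • nface k A (n + 1) i)
    + ((-1 : k) ^ (n + 1)) • (mulFront k A n ∘ₗ (rotR k A (n + 2)).toLinearMap)

/-- Insert a `1` in front: `a₀⊗⋯⊗a_{n-1} ↦ 1⊗a₀⊗⋯⊗a_{n-1}`. -/
noncomputable def ins0 (n : ℕ) : Tp k A n →ₗ[k] Tp k A (n + 1) :=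
  (toFront k A n).toLinearMap ∘ₗ (TensorProduct.mk k A (Tp k A n) 1)

/-- Insert a `1` in the second slot: `a₀⊗a₁⊗⋯ ↦ a₀⊗1⊗a₁⊗⋯`. -/
noncomputable def ins1 (n : ℕ) : Tp k A (n + 1) →ₗ[k] Tp k A (n + 2) :=
  (rotR k A (n + 2)).toLinearMap ∘ₗ (ins0 k A (n + 1)) ∘ₗ (rotR k A (n + 1)).symm.toLinearMap

/-- The Connes boundary operator `B_n : A^{⊗(n+1)} → A^{⊗(n+2)}`, i.e.
`B(a₀⊗⋯⊗aₙ) = Σ_{i=0}^n (-1)^{ni} (1⊗aᵢ⊗⋯⊗aₙ⊗a₀⊗⋯⊗aᵢ₋₁ − aᵢ⊗1⊗aᵢ₊₁⊗⋯⊗aₙ⊗a₀⊗⋯⊗aᵢ₋₁)`. -/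
noncomputable def hB (n : ℕ) : Tp k A (n + 1) →ₗ[k] Tp k A (n + 2) :=
  ∑ i : Fin (n + 1), ((-1 : k) ^ (n * (i : ℕ))) •
    ((ins0 k A (n + 1) - ins1 k A n) ∘ₗ
      (PiTensorProduct.reindex k (fun _ => A) (((finRotate (n + 1)) ^ (i : ℕ))⁻¹)).toLinearMap)

/-- Contraction by a degree-0 cochain `c ∈ A`:
`i_c(a₀⊗a₁⊗⋯⊗aₙ) = a₀c⊗a₁⊗⋯⊗aₙ`. -/
noncomputable def iC (c : A) (n : ℕ) : Tp k A (n + 1) →ₗ[k] Tp k A (n + 1) :=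
  (toFront k A n).toLinearMap ∘ₗ
    (LinearMap.rTensor (Tp k A n) (LinearMap.mulRight k c)) ∘ₗ
      (toFront k A n).symm.toLinearMap

/-- Split in the middle: `A^{⊗(m+n)} ≃ A^{⊗m} ⊗ A^{⊗n}`. -/
noncomputable def splitMid (m n : ℕ) : Tp k A (m + n) ≃ₗ[k] (Tp k A m ⊗[k] Tp k A n) :=
  (PiTensorProduct.reindex k (fun _ => A)
      (finSumFinEquiv : Fin m ⊕ Fin n ≃ Fin (m + n)).symm) ≪≫ₗ
    (PiTensorProduct.tmulEquiv k A).symm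

/-- Contraction by an `m`-cochain `β : A^{⊗m} → A`:
`i_β(a₀⊗a₁⊗⋯⊗aₙ) = (a₀·β(a₁⊗⋯⊗aₘ)) ⊗ a_{m+1} ⊗ ⋯ ⊗ aₙ`. -/
noncomputable def iContr {m : ℕ} (β : Tp k A m →ₗ[k] A) (n : ℕ) :
    Tp k A (m + n + 1) →ₗ[k] Tp k A (n + 1) :=
  (toFront k A n).toLinearMap ∘ₗ
    (LinearMap.rTensor (Tp k A n) (LinearMap.mul' k A)) ∘ₗ
      (TensorProduct.assoc k A A (Tp k A n)).symm.toLinearMap ∘ₗ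
        (LinearMap.lTensor A
          ((LinearMap.rTensor (Tp k A n) β) ∘ₗ (splitMid k A m n).toLinearMap)) ∘ₗ
          (toFront k A (m + n)).symm.toLinearMap

/-- The Hochschild coboundary `δ^m : Hom(A^{⊗m}, A) → Hom(A^{⊗(m+1)}, A)`:
`(δβ)(a₁⊗⋯⊗a_{m+1}) = a₁β(a₂⊗⋯) + Σ_{i=1}^m (-1)^i β(⋯⊗aᵢaᵢ₊₁⊗⋯)
  + (-1)^{m+1} β(a₁⊗⋯⊗aₘ)a_{m+1}`. -/
noncomputable def hdelta (m : ℕ) (β : Tp k A m →ₗ[k] A) : Tp k A (m + 1) →ₗ[k] A :=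
  (TensorProduct.lift ((LinearMap.mul k A).compl₂ β) ∘ₗ (toFront k A m).symm.toLinearMap)
    + ∑ j : Fin m, ((-1 : k) ^ ((j : ℕ) + 1)) • (β ∘ₗ nface k A m j)
    + ((-1 : k) ^ (m + 1)) •
        (TensorProduct.lift ((LinearMap.mul k A) ∘ₗ β) ∘ₗ (toBack k A m).symm.toLinearMap)

/-- Left action of `A` on `A* = Hom_k(A,k)`: `(a·g)(x) = g(xa)`. -/
noncomputable def la : A →ₗ[k] Module.Dual k A →ₗ[k] Module.Dual k A :=
  LinearMap.mk₂ k (fun a g => g ∘ₗ LinearMap.mulRight k a)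
    (by intro a a' g; ext x; simp [mul_add])
    (by intro c a g; ext x; simp)
    (by intro a g g'; ext x; simp)
    (by intro c a g; ext x; simp)

/-- Right action of `A` on `A* = Hom_k(A,k)`: `(f·b)(x) = f(bx)`. -/
noncomputable def ra : Module.Dual k A →ₗ[k] A →ₗ[k] Module.Dual k A :=
  LinearMap.mk₂ k (fun g b => g ∘ₗ LinearMap.mulLeft k b)
    (by intro g g' b; ext x; simp)
    (by intro c g b; ext x; simp)
    (by intro g b b'; ext x; simp [add_mul])
    (by intro c g b; ext x; simp)

/-- The Hochschild coboundary `δ^m : Hom(A^{⊗m}, A^*) → Hom(A^{⊗(m+1)}, A^*)`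
for cochains with values in the dual bimodule `A^*`. -/
noncomputable def hdeltaD (m : ℕ) (β : Tp k A m →ₗ[k] Module.Dual k A) :
    Tp k A (m + 1) →ₗ[k] Module.Dual k A :=
  (TensorProduct.lift ((la k A).compl₂ β) ∘ₗ (toFront k A m).symm.toLinearMap)
    + ∑ j : Fin m, ((-1 : k) ^ ((j : ℕ) + 1)) • (β ∘ₗ nface k A m j)
    + ((-1 : k) ^ (m + 1)) •
        (TensorProduct.lift ((ra k A) ∘ₗ β) ∘ₗ (toBack k A m).symm.toLinearMap)

/-- The canonical adjunction `(A^{⊗(n+1)})^* → Hom_k(A^{⊗n}, A^*)`,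
`φ ↦ ((a₁⊗⋯⊗aₙ) ↦ (a₀ ↦ φ(a₀⊗a₁⊗⋯⊗aₙ)))`. -/
noncomputable def adj (n : ℕ) (φ : Module.Dual k (Tp k A (n + 1))) :
    Tp k A n →ₗ[k] Module.Dual k A :=
  (TensorProduct.curry (φ ∘ₗ (toFront k A n).toLinearMap)).flip

/-- `A^{⊗3} ≃ A ⊗ (A ⊗ A)`. -/
noncomputable def triple : Tp k A 3 ≃ₗ[k] (A ⊗[k] (A ⊗[k] A)) :=
  (toFront k A 2).symm ≪≫ₗ
    TensorProduct.congr (LinearEquiv.refl k A)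
      ((toFront k A 1).symm ≪≫ₗ TensorProduct.congr (LinearEquiv.refl k A) (single k A))

/-- The adjoint `α̃ ∈ (A^{⊗3})^*` of a 2-cochain `α : A ⊗ A → A^*`,
`α̃(a⊗b⊗d) := α(b⊗d)(a)`. -/
noncomputable def adjCochain (α : A →ₗ[k] A →ₗ[k] Module.Dual k A) :
    Module.Dual k (Tp k A 3) :=
  (TensorProduct.lift
      ((TensorProduct.lift.equiv (RingHom.id k) A A k).toLinearMap ∘ₗ (LinearMap.lflip.toLinearMap ∘ₗ α).flip)) ∘ₗ
    (triple k A).toLinearMap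

/-!
Evaluate `α̃ ∘ i_c = α' + β ∘ b₂` on `1⊗a⊗b`, `1⊗b⊗a`, `a⊗1⊗b`, `b⊗1⊗a` and take the alternating
sum. The `α'`-terms assemble into `α'(B₁(a⊗b)) = -h'(ab - ba)` and the `β`-terms into
`β(B₀(ab - ba))`. What is left, `α(1⊗b)(ac) - α(1⊗a)(bc)`, equals `α(1⊗1)((ba - ab)c)` by the
cocycle identity `α(1⊗v)(w) = α(1⊗1)(vw)`, and `c` is central.
-/

variable {k} {A}
open PiTensorProduct

@[simp] theorem single_tprod (f : Fin 1 → A) : single k A (PiTensorProduct.tprod k f) = f 0 :=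
  subsingletonEquiv_apply_tprod 0 f

@[simp] theorem single_symm_apply (a : A) : (single k A).symm a = PiTensorProduct.tprod k ![a] := by
  rw [LinearEquiv.symm_apply_eq, single_tprod, Matrix.cons_val_zero]

theorem toFront_tprod (n : ℕ) (a : A) (f : Fin n → A) :
    toFront k A n (a ⊗ₜ[k] PiTensorProduct.tprod k f) = PiTensorProduct.tprod k (Fin.cons a f) := by
  simp only [toFront, LinearEquiv.trans_apply, TensorProduct.congr_tmul,
    LinearEquiv.refl_apply, single_symm_apply, tmulEquiv_apply, reindex_tprod]
  congr 1
  funext i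
  refine Fin.cases rfl (fun j => ?_) i
  have : Fin.cast (Nat.add_comm n 1) j.succ = Fin.natAdd 1 j := Fin.ext (by simp [add_comm])
  simp [this]

theorem toFront_symm_tprod (n : ℕ) (f : Fin (n + 1) → A) :
    (toFront k A n).symm (PiTensorProduct.tprod k f) =
      f 0 ⊗ₜ[k] PiTensorProduct.tprod k (Fin.tail f) := by
  rw [LinearEquiv.symm_apply_eq, toFront_tprod, Fin.cons_self_tail]

theorem mulFront_tprod (n : ℕ) (f : Fin (n + 2) → A) :
    mulFront k A n (PiTensorProduct.tprod k f) =
      PiTensorProduct.tprod k (Fin.cons (f 0 * f 1) (fun i => f i.succ.succ)) := by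
  simp only [mulFront, LinearMap.coe_comp, Function.comp_apply, LinearEquiv.coe_coe,
    toFront_symm_tprod, LinearMap.lTensor_tmul, TensorProduct.assoc_symm_tmul,
    LinearMap.rTensor_tmul, LinearMap.mul'_apply, toFront_tprod]
  rfl

theorem ins0_tprod (n : ℕ) (f : Fin n → A) :
    ins0 k A n (PiTensorProduct.tprod k f) = PiTensorProduct.tprod k (Fin.cons 1 f) :=
  toFront_tprod n 1 f

theorem iC_tprod (c : A) (n : ℕ) (a : A) (f : Fin n → A) :
    iC k A c n (PiTensorProduct.tprod k (Matrix.vecCons a f)) =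
      PiTensorProduct.tprod k (Matrix.vecCons (a * c) f) := by
  simp only [iC, LinearMap.comp_apply, LinearEquiv.coe_coe, toFront_symm_tprod,
    LinearMap.rTensor_tmul, LinearMap.mulRight_apply, toFront_tprod]
  rfl

theorem adjCochain_tprod (α : A →ₗ[k] A →ₗ[k] Module.Dual k A) (a b d : A) :
    adjCochain k A α (PiTensorProduct.tprod k ![a, b, d]) = α b d a := by
  simp only [adjCochain, triple, LinearMap.comp_apply, LinearEquiv.coe_coe,
    LinearEquiv.trans_apply, toFront_symm_tprod, TensorProduct.congr_tmul, LinearEquiv.refl_apply,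
    TensorProduct.lift.tmul, single_tprod]
  rfl

/- Below, once the two sides are matched summand by summand, each summand is a `tprod` of a
permutation of the entries by a concrete `finRotate` power, which `rfl` evaluates. -/

theorem hb_zero_tprod (a b : A) :
    hb k A 0 (PiTensorProduct.tprod k ![a, b]) =
      PiTensorProduct.tprod k ![a * b] - PiTensorProduct.tprod k ![b * a] := by
  simp only [hb, nface, rotR, Fin.sum_univ_succ, Fin.sum_univ_zero, LinearMap.add_apply,
    LinearMap.smul_apply, LinearMap.comp_apply, LinearEquiv.coe_coe, reindex_tprod,
    mulFront_tprod, Fin.val_zero, pow_zero, zero_add, pow_one, one_smul, neg_smul, add_zero,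
    ← sub_eq_add_neg]
  refine congrArg₂ (· - ·) ?_ ?_ <;> exact congrArg _ (funext fun i => by fin_cases i; rfl)

theorem hb_one_tprod (a b d : A) :
    hb k A 1 (PiTensorProduct.tprod k ![a, b, d]) =
      PiTensorProduct.tprod k ![a * b, d] - PiTensorProduct.tprod k ![a, b * d] +
        PiTensorProduct.tprod k ![d * a, b] := by
  simp only [hb, nface, rotR, Fin.sum_univ_succ, Fin.sum_univ_zero, LinearMap.add_apply,
    LinearMap.smul_apply, LinearMap.comp_apply, LinearEquiv.coe_coe, reindex_tprod,
    mulFront_tprod, Fin.val_zero, Fin.val_succ, pow_zero, zero_add, pow_one, Nat.reduceAdd,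
    neg_one_sq, one_smul, neg_smul, add_zero, ← sub_eq_add_neg]
  refine congrArg₂ (· + ·) (congrArg₂ (· - ·) ?_ ?_) ?_ <;>
    exact congrArg _ (funext fun i => by fin_cases i <;> rfl)

theorem hB_zero_tprod (a : A) :
    hB k A 0 (PiTensorProduct.tprod k ![a]) =
      PiTensorProduct.tprod k ![1, a] - PiTensorProduct.tprod k ![a, 1] := by
  simp only [hB, ins1, rotR, Fin.sum_univ_succ, Fin.sum_univ_zero, LinearMap.sub_apply,
    LinearMap.comp_apply, LinearEquiv.coe_coe, reindex_tprod, reindex_symm, ins0_tprod,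
    Fin.val_zero, pow_zero, mul_zero, one_smul, add_zero]
  refine congrArg₂ (· - ·) ?_ ?_ <;> exact congrArg _ (funext fun i => by fin_cases i <;> rfl)

theorem hB_one_tprod (a b : A) :
    hB k A 1 (PiTensorProduct.tprod k ![a, b]) =
      (PiTensorProduct.tprod k ![1, a, b] - PiTensorProduct.tprod k ![a, 1, b]) -
        (PiTensorProduct.tprod k ![1, b, a] - PiTensorProduct.tprod k ![b, 1, a]) := by
  simp only [hB, ins1, rotR, Fin.sum_univ_succ, Fin.sum_univ_zero, LinearMap.add_apply,
    LinearMap.sub_apply, LinearMap.smul_apply, LinearMap.comp_apply, LinearEquiv.coe_coe,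
    reindex_tprod, reindex_symm, ins0_tprod, Fin.val_zero, Fin.val_succ, pow_zero, zero_add,
    pow_one, mul_zero, mul_one, one_smul, neg_smul, add_zero, ← sub_eq_add_neg]
  refine congrArg₂ (· - ·) (congrArg₂ (· - ·) ?_ ?_) (congrArg₂ (· - ·) ?_ ?_) <;>
    exact congrArg _ (funext fun i => by fin_cases i <;> rfl)

theorem cocycle_apply_one_left (α : A →ₗ[k] A →ₗ[k] Module.Dual k A)
    (hα : ∀ a b d x : A, α b d (x * a) - α (a * b) d x + α a (b * d) x - α a b (d * x) = 0)
    (v w : A) : α 1 v w = α 1 1 (v * w) := by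
  simpa [sub_eq_zero] using hα 1 1 v w

theorem cyclic_lift_implies_symmetry_condition
    (k : Type*) [Field k] (A : Type*) [Ring A] [Algebra k A]
    (α : A →ₗ[k] A →ₗ[k] Module.Dual k A)
    (hα : ∀ a b d x : A, α b d (x * a) - α (a * b) d x + α a (b * d) x - α a b (d * x) = 0)
    (c : A) (hc : ∀ a : A, a * c = c * a)
    (α' : Module.Dual k (Tp k A 3)) (h' : Module.Dual k A) (β : Module.Dual k (Tp k A 2))
    (h2 : α' ∘ₗ hB k A 1 + ((h' ∘ₗ (single k A).toLinearMap) ∘ₗ hb k A 0) = 0)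
    (h3 : adjCochain k A α ∘ₗ iC k A c 2 = α' + β ∘ₗ hb k A 1) :
    ∀ a b : A,
      α a b c - α b a c
        + (h' + β ∘ₗ hB k A 0 ∘ₗ (single k A).symm.toLinearMap
            + (α 1 1) ∘ₗ LinearMap.mulLeft k c) (a * b - b * a) = 0 := by
  intro a b
  have connes := LinearMap.congr_fun h2 (PiTensorProduct.tprod k ![a, b])
  simp only [LinearMap.add_apply, LinearMap.comp_apply, LinearEquiv.coe_coe, LinearMap.zero_apply,
    hB_one_tprod, hb_zero_tprod, map_sub, single_tprod, Matrix.cons_val_zero] at connes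
  have lift (x y z : A) : α y z (x * c) =
      α' (PiTensorProduct.tprod k ![x, y, z]) + β (hb k A 1 (PiTensorProduct.tprod k ![x, y, z])) := by
    have := LinearMap.congr_fun h3 (PiTensorProduct.tprod k ![x, y, z])
    rwa [LinearMap.comp_apply, iC_tprod, adjCochain_tprod] at this
  have e₁ := lift 1 a b
  have e₂ := lift 1 b a
  have e₃ := lift a 1 b
  have e₄ := lift b 1 a
  simp only [hb_one_tprod, map_add, map_sub, one_mul, mul_one] at e₁ e₂ e₃ e₄
  rw [cocycle_apply_one_left α hα] at e₃ e₄
  simp only [LinearMap.add_apply, LinearMap.comp_apply, LinearEquiv.coe_coe, single_symm_apply,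
    LinearMap.mulLeft_apply, map_sub, hB_zero_tprod]
  rw [← hc (a * b), ← hc (b * a), mul_assoc, mul_assoc]
  linear_combination connes + e₁ - e₂ - e₃ + e₄

end HochschildScaffold
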